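/- arXiv:1402.6459 — 2 statements merged into one kernel-verified Lean document; each statement's English description precedes it below -/
import Mathlib

section
/- Any two executions P →*_c Q and P →*_c R realizing the same pairing c are permutations of each other's steps, and in particular Q ≡ R. -/
/-! Multiplicative CCS (MCCS): processes with located action prefixes.
`act true a ℓ P` is the positive prefix `a^ℓ.P`, `act false a ℓ P` is `ā^ℓ.P`. -/
inductive Proc : Type where
  | one : Proc
  | par : Proc → Proc → Proc
  | act : Bool → ℕ → ℕ → Proc → Proc

namespace Proc

/-- The list of locations occurring in a term. -/
def locList : Proc → List ℕ
  | one => []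
  | par P Q => P.locList ++ Q.locList
  | act _ _ ℓ P => ℓ :: P.locList

/-- The set of locations occurring in a term. -/
def locs (P : Proc) : Finset ℕ := P.locList.toFinset

/-- Well-formed: each location occurs at most once. -/
def WF (P : Proc) : Prop := P.locList.Nodup

/-- The subject (channel name) of a location. -/
def subj : Proc → ℕ → Option ℕ
  | one, _ => none
  | par P Q, ℓ => (P.subj ℓ).orElse (fun _ => Q.subj ℓ)
  | act _ a m P, ℓ => if ℓ = m then some a else P.subj ℓ

/-- The polarity of a location (`true` = positive). -/
def pol : Proc → ℕ → Option Bool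
  | one, _ => none
  | par P Q, ℓ => (P.pol ℓ).orElse (fun _ => Q.pol ℓ)
  | act b _ m P, ℓ => if ℓ = m then some b else P.pol ℓ

/-- The (strict) action / prefixing order of a term: `plt P ℓ m` iff the
prefix at `ℓ` guards the one at `m`. -/
inductive plt : Proc → ℕ → ℕ → Prop where
  | parL {P Q ℓ m} : plt P ℓ m → plt (par P Q) ℓ m
  | parR {P Q ℓ m} : plt Q ℓ m → plt (par P Q) ℓ m
  | here {b a ℓ m P} : m ∈ P.locs → plt (act b a ℓ P) ℓ m
  | under {b a n P ℓ m} : plt P ℓ m → plt (act b a n P) ℓ m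

/-- Number of action prefixes. -/
def size : Proc → ℕ
  | one => 0
  | par P Q => P.size + Q.size
  | act _ _ _ P => P.size + 1

end Proc

/-- Structural congruence: smallest congruence making `par` commutative,
associative, with `one` as neutral element. -/
inductive SC : Proc → Proc → Prop where
  | refl (P) : SC P P
  | symm {P Q} : SC P Q → SC Q P
  | trans {P Q R} : SC P Q → SC Q R → SC P R
  | parComm (P Q) : SC (.par P Q) (.par Q P)
  | parAssoc (P Q R) : SC (.par (.par P Q) R) (.par P (.par Q R))
  | parUnit (P) : SC (.par .one P) P
  | parCong {P P' Q Q'} : SC P P' → SC Q Q' → SC (.par P Q) (.par P' Q')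
  | actCong (b a ℓ) {P Q} : SC P Q → SC (.act b a ℓ P) (.act b a ℓ Q)

/-- One execution step, labelled by the pair (positive location, negative location)
of the two synchronised prefixes; defined on structural congruence classes. -/
def Step (P : Proc) (p : ℕ × ℕ) (Q : Proc) : Prop :=
  ∃ a P₁ Q₁ R,
    SC P (.par (.act true a p.1 P₁) (.par (.act false a p.2 Q₁) R)) ∧
    SC Q (.par P₁ (.par Q₁ R))

/-- Execution sequences, annotated by the list of synchronisation pairs. -/
inductive ExecL : Proc → List (ℕ × ℕ) → Proc → Prop where
  | refl {P Q} : SC P Q → ExecL P [] Q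
  | step {P p Q l R} : Step P p Q → ExecL Q l R → ExecL P (p :: l) R

/-- The domain of a pairing (set of paired locations). -/
def pdom (c : Finset (ℕ × ℕ)) : Finset ℕ := c.image Prod.fst ∪ c.image Prod.snd

/-- A pairing of `P`: a partial involution on locations of `P`,
represented as a set of (positive location, negative location) pairs with
matching subjects, opposite polarities and pairwise disjoint components. -/
def IsPairing (P : Proc) (c : Finset (ℕ × ℕ)) : Prop :=
  (∀ p ∈ c, P.pol p.1 = some true ∧ P.pol p.2 = some false ∧
      P.subj p.1 = P.subj p.2 ∧ (P.subj p.1).isSome) ∧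
  (∀ p ∈ c, ∀ q ∈ c, p ≠ q → p.1 ≠ q.1 ∧ p.2 ≠ q.2 ∧ p.1 ≠ q.2)

/-- The equivalence relation `∼_c` generated by a pairing `c`. -/
def peqv (c : Finset (ℕ × ℕ)) : ℕ → ℕ → Prop :=
  Relation.EqvGen (fun x y => (x, y) ∈ c ∨ (y, x) ∈ c)

/-- The relation `∼_c ∘ <_P ∘ ∼_c`. -/
def consRel (P : Proc) (c : Finset (ℕ × ℕ)) (x y : ℕ) : Prop :=
  ∃ u v, peqv c x u ∧ P.plt u v ∧ peqv c v y

/-- A relation is acyclic if it has no (transitive) cycle. -/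
def Acyclic (r : ℕ → ℕ → Prop) : Prop := ∀ x, ¬ Relation.TransGen r x x

/-- The domain of `c` is downward closed for the action order of `P`. -/
def DownClosed (P : Proc) (c : Finset (ℕ × ℕ)) : Prop :=
  ∀ ℓ m, P.plt ℓ m → m ∈ pdom c → ℓ ∈ pdom c

/-- Consistency of a pairing. -/
def Consistent (P : Proc) (c : Finset (ℕ × ℕ)) : Prop :=
  DownClosed P c ∧ Acyclic (consRel P c)

/-! MLL with actions (MLLa). -/

inductive Form : Type where
  | pv : ℕ → Form
  | nv : ℕ → Form
  | tens : Form → Form → Form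
  | parr : Form → Form → Form
  | modp : ℕ → Form → Form
  | modn : ℕ → Form → Form

namespace Form

def dual : Form → Form
  | pv α => nv α
  | nv α => pv α
  | tens A B => parr A.dual B.dual
  | parr A B => tens A.dual B.dual
  | modp a A => modn a A.dual
  | modn a A => modp a A.dual

/-- Instantiation of propositional variables. -/
def subst (σ : ℕ → Form) : Form → Form
  | pv α => σ α
  | nv α => (σ α).dual
  | tens A B => tens (A.subst σ) (B.subst σ)
  | parr A B => parr (A.subst σ) (B.subst σ)
  | modp a A => modp a (A.subst σ)
  | modn a A => modn a (A.subst σ)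

end Form

/-- Sequent-calculus provability for MLLa.  `Prov true` allows the modality
rules; `Prov false` is pure MLL (axiom, cut, ⊗, ⅋, exchange only). -/
inductive Prov : Bool → List Form → Prop where
  | ax (b A) : Prov b [Form.dual A, A]
  | cut {b A Γ Δ} : Prov b (A :: Γ) → Prov b (A.dual :: Δ) → Prov b (Γ ++ Δ)
  | tens {b A B Γ Δ} : Prov b (A :: Γ) → Prov b (B :: Δ) →
      Prov b (Form.tens A B :: (Γ ++ Δ))
  | parr {b A B Γ} : Prov b (A :: B :: Γ) → Prov b (Form.parr A B :: Γ)
  | exch {b Γ Δ} : Prov b Γ → Γ.Perm Δ → Prov b Δ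
  | modp {A Γ} (a) : Prov true (A :: Γ) → Prov true (Form.modp a A :: Γ)
  | modn {A Γ} (a) : Prov true (A :: Γ) → Prov true (Form.modn a A :: Γ)

/-- Synchronous type assignment (with a fresh-variable counter):
`tSA P n = (⌈P⌉ₛ, n')` using variables `n, …, n'-1`, each exactly once
positively and once negatively. -/
def tSA : Proc → ℕ → Form × ℕ
  | .one, n => (.parr (.nv n) (.pv n), n + 1)
  | .par P Q, n =>
      let r := tSA P n
      let s := tSA Q r.2
      (.tens r.1 s.1, s.2)
  | .act true a _ P, n =>
      let r := tSA P (n + 1)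
      (.modp a (.parr (.nv n) (.tens r.1 (.pv n))), r.2)
  | .act false a _ P, n =>
      let r := tSA P (n + 1)
      (.parr (.modn a (.tens r.1 (.nv n))) (.pv n), r.2)

/-- Asynchronous type assignment. -/
def tAA : Proc → ℕ → Form × ℕ
  | .one, n => (.parr (.nv n) (.pv n), n + 1)
  | .par P Q, n =>
      let r := tAA P n
      let s := tAA Q r.2
      (.tens r.1 s.1, s.2)
  | .act true a _ P, n =>
      let r := tAA P (n + 1)
      (.parr (.modp a (.nv n)) (.tens r.1 (.pv n)), r.2)
  | .act false a _ P, n =>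
      let r := tAA P (n + 1)
      (.parr (.tens r.1 (.nv n)) (.modn a (.pv n)), r.2)

def tS (P : Proc) : Form := (tSA P 0).1

def tA (P : Proc) : Form := (tAA P 0).1

/-- `⌈P⌉ₛ ⊸ ⌈Q⌉ₛ` is provable in pure MLL for some instantiation of the
propositional variables of `⌈P⌉ₛ` (the variables of the two translations
are chosen disjoint). -/
def SImp (P Q : Proc) : Prop :=
  ∃ σ : ℕ → Form,
    Prov false [Form.parr (((tSA P 0).1.subst σ)).dual (tSA Q (tSA P 0).2).1]

/-- Asynchronous version: `⌈P⌉ₐ ⊸ ⌈Q⌉ₐ` provable in pure MLL under some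
instantiation of the variables of `⌈P⌉ₐ`. -/
def AImp (P Q : Proc) : Prop :=
  ∃ σ : ℕ → Form,
    Prov false [Form.parr (((tAA P 0).1.subst σ)).dual (tAA Q (tAA P 0).2).1]

/-- Cut-free MLLa proof trees. -/
inductive CF : List Form → Type where
  | ax (A) : CF [Form.dual A, A]
  | tens {A B Γ Δ} : CF (Γ ++ [A]) → CF (B :: Δ) → CF (Γ ++ Form.tens A B :: Δ)
  | parr {A B Γ Δ} : CF (Γ ++ A :: B :: Δ) → CF (Γ ++ Form.parr A B :: Δ)
  | modp {A Γ Δ} (a) : CF (Γ ++ A :: Δ) → CF (Γ ++ Form.modp a A :: Δ)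
  | modn {A Γ Δ} (a) : CF (Γ ++ A :: Δ) → CF (Γ ++ Form.modn a A :: Δ)

/-- Erase the prefixes whose location lies in `S`. -/
def eraseLocs (S : List ℕ) : Proc → Proc
  | .one => .one
  | .par P Q => .par (eraseLocs S P) (eraseLocs S Q)
  | .act b a ℓ P => if ℓ ∈ S then eraseLocs S P else .act b a ℓ (eraseLocs S P)

lemma locList_eraseLocs (S : List ℕ) (P : Proc) :
    (eraseLocs S P).locList = P.locList.filter (fun ℓ => ℓ ∉ S) := by
  induction P with
  | one => rfl
  | par P Q ihP ihQ => simp [eraseLocs, Proc.locList, ihP, ihQ]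
  | act b a ℓ P ih =>
      by_cases h : ℓ ∈ S <;> simp [eraseLocs, Proc.locList, h, ih]

lemma eraseLocs_congr {S T : List ℕ} (h : ∀ ℓ, ℓ ∈ S ↔ ℓ ∈ T) (P : Proc) :
    eraseLocs S P = eraseLocs T P := by
  induction P with
  | one => rfl
  | par P Q ihP ihQ => simp [eraseLocs, ihP, ihQ]
  | act b a ℓ P ih =>
      by_cases hm : ℓ ∈ S
      · simp [eraseLocs, hm, (h ℓ).1 hm, ih]
      · have : ℓ ∉ T := fun ht => hm ((h ℓ).2 ht)
        simp [eraseLocs, hm, this, ih]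

lemma eraseLocs_of_disjoint {S : List ℕ} {P : Proc}
    (h : ∀ ℓ ∈ S, ℓ ∉ P.locList) : eraseLocs S P = P := by
  induction P with
  | one => rfl
  | par P Q ihP ihQ =>
      simp only [Proc.locList, List.mem_append] at h
      rw [eraseLocs, ihP (fun ℓ hℓ hm => h ℓ hℓ (Or.inl hm)),
        ihQ (fun ℓ hℓ hm => h ℓ hℓ (Or.inr hm))]
  | act b a ℓ P ih =>
      have hℓ : ℓ ∉ S := fun hs => h ℓ hs (by simp [Proc.locList])
      simp only [Proc.locList, List.mem_cons] at h
      rw [eraseLocs, if_neg hℓ, ih (fun m hm hmem => h m hm (Or.inr hmem))]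

lemma eraseLocs_eraseLocs (S T : List ℕ) (P : Proc) :
    eraseLocs T (eraseLocs S P) = eraseLocs (S ++ T) P := by
  induction P with
  | one => rfl
  | par P Q ihP ihQ => simp [eraseLocs, ihP, ihQ]
  | act b a ℓ P ih =>
      by_cases hS : ℓ ∈ S
      · simp [eraseLocs, hS, ih]
      · by_cases hT : ℓ ∈ T <;> simp [eraseLocs, hS, hT, ih]

lemma SC.locList_perm {P Q : Proc} (h : SC P Q) : P.locList.Perm Q.locList := by
  induction h with
  | refl P => exact List.Perm.refl _
  | symm _ ih => exact ih.symm
  | trans _ _ ih1 ih2 => exact ih1.trans ih2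
  | parComm P Q => simpa [Proc.locList] using List.perm_append_comm
  | parAssoc P Q R => simp [Proc.locList, List.append_assoc]
  | parUnit P => simp [Proc.locList]
  | parCong _ _ ih1 ih2 => simpa [Proc.locList] using ih1.append ih2
  | actCong b a ℓ _ ih => simpa [Proc.locList] using ih.cons ℓ

lemma SC.wf {P Q : Proc} (h : SC P Q) (hP : P.WF) : Q.WF :=
  h.locList_perm.nodup_iff.mp hP

lemma SC.eraseLocs {P Q : Proc} (S : List ℕ) (h : SC P Q) :
    SC (eraseLocs S P) (eraseLocs S Q) := by
  induction h with
  | refl P => exact SC.refl _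
  | symm _ ih => exact ih.symm
  | trans _ _ ih1 ih2 => exact ih1.trans ih2
  | parComm P Q => exact SC.parComm _ _
  | parAssoc P Q R => exact SC.parAssoc _ _ _
  | parUnit P => exact SC.parUnit _
  | parCong _ _ ih1 ih2 => exact SC.parCong ih1 ih2
  | actCong b a ℓ _ ih =>
      by_cases hm : ℓ ∈ S
      · simpa [_root_.eraseLocs, hm] using ih
      · simpa [_root_.eraseLocs, hm] using SC.actCong b a ℓ ih

lemma Proc.WF.eraseLocs {P : Proc} (S : List ℕ) (h : P.WF) : (eraseLocs S P).WF := by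
  unfold Proc.WF
  rw [locList_eraseLocs]
  exact h.filter _

/-- One step consumes the two paired locations. -/
lemma step_residual {P : Proc} {p : ℕ × ℕ} {Q : Proc}
    (h : Step P p Q) (hWF : P.WF) :
    SC Q (eraseLocs [p.1, p.2] P) ∧ p.1 ∈ P.locList ∧ p.2 ∈ P.locList ∧
      p.1 ≠ p.2 := by
  obtain ⟨a, P₁, Q₁, R, hP, hQ⟩ := h
  have hF : (Proc.par (.act true a p.1 P₁) (.par (.act false a p.2 Q₁) R)).WF :=
    hP.wf hWF
  simp only [Proc.WF, Proc.locList, List.nodup_cons, List.nodup_append,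
    List.mem_append, List.mem_cons, List.disjoint_left] at hF
  obtain ⟨⟨hA, -⟩, ⟨⟨hB, -⟩, -, hD⟩, hE⟩ := hF
  have h1 : (p.1 ≠ p.2 ∧ p.1 ∉ Q₁.locList) ∧ p.1 ∉ R.locList :=
    ⟨⟨hE _ (Or.inl rfl) _ (Or.inl (Or.inl rfl)),
      fun h => hE _ (Or.inl rfl) _ (Or.inl (Or.inr h)) rfl⟩,
      fun h => hE _ (Or.inl rfl) _ (Or.inr h) rfl⟩
  obtain ⟨⟨hne, hQ1⟩, hR1⟩ := h1
  have hP2 : p.2 ∉ P₁.locList := by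
    intro hm
    exact hE _ (Or.inr hm) _ (Or.inl (Or.inl rfl)) rfl
  have hR2 : p.2 ∉ R.locList := fun h => hD _ (Or.inl rfl) _ h rfl
  have key : eraseLocs [p.1, p.2]
      (Proc.par (.act true a p.1 P₁) (.par (.act false a p.2 Q₁) R)) =
      Proc.par P₁ (.par Q₁ R) := by
    have hP₁ : ∀ ℓ ∈ [p.1, p.2], ℓ ∉ P₁.locList := by
      intro ℓ hℓ
      simp only [List.mem_cons, List.mem_singleton, List.not_mem_nil,
        or_false] at hℓ
      rcases hℓ with rfl | rfl
      · exact hA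
      · exact hP2
    have hQ₁ : ∀ ℓ ∈ [p.1, p.2], ℓ ∉ Q₁.locList := by
      intro ℓ hℓ
      simp only [List.mem_cons, List.mem_singleton, List.not_mem_nil,
        or_false] at hℓ
      rcases hℓ with rfl | rfl
      · exact hQ1
      · exact hB
    have hR : ∀ ℓ ∈ [p.1, p.2], ℓ ∉ R.locList := by
      intro ℓ hℓ
      simp only [List.mem_cons, List.mem_singleton, List.not_mem_nil,
        or_false] at hℓ
      rcases hℓ with rfl | rfl
      · exact hR1
      · exact hR2
    simp only [eraseLocs, if_pos (by simp : p.1 ∈ [p.1, p.2]),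
      if_pos (by simp : p.2 ∈ [p.1, p.2])]
    rw [eraseLocs_of_disjoint hP₁, eraseLocs_of_disjoint hQ₁,
      eraseLocs_of_disjoint hR]
  have hmem : p.1 ∈ P.locList ∧ p.2 ∈ P.locList := by
    have := hP.locList_perm
    constructor
    · exact this.mem_iff.mpr (by simp [Proc.locList])
    · exact this.mem_iff.mpr (by simp [Proc.locList])
  refine ⟨?_, hmem.1, hmem.2, ?_⟩
  · exact hQ.trans ((key ▸ (hP.eraseLocs [p.1, p.2])).symm)
  · exact hne

/-- The locations consumed along an execution, flattened. -/
def flatLocs (l : List (ℕ × ℕ)) : List ℕ := l.map Prod.fst ++ l.map Prod.snd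

lemma exec_residual {P : Proc} {l : List (ℕ × ℕ)} {Q : Proc}
    (h : ExecL P l Q) (hWF : P.WF) :
    SC Q (eraseLocs (flatLocs l) P) ∧ (flatLocs l).Nodup ∧
      ∀ ℓ ∈ flatLocs l, ℓ ∈ P.locList := by
  induction h with
  | @refl P Q hPQ =>
      refine ⟨?_, by simp [flatLocs], by simp [flatLocs]⟩
      rw [eraseLocs_of_disjoint (by simp [flatLocs])]
      exact hPQ.symm
  | @step P p Q₁ l R hstep hexec ih =>
      obtain ⟨hSC, hp1, hp2, hne⟩ := step_residual hstep hWF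
      have hQ₁WF : Q₁.WF := hSC.symm.wf (hWF.eraseLocs _)
      obtain ⟨ihSC, ihNodup, ihMem⟩ := ih hQ₁WF
      have hQ₁loc : ∀ ℓ ∈ flatLocs l, ℓ ∉ [p.1, p.2] := by
        intro ℓ hℓ hmem
        have := ihMem ℓ hℓ
        have := hSC.locList_perm.mem_iff.mp this
        rw [locList_eraseLocs, List.mem_filter] at this
        exact absurd hmem (by simpa using this.2)
      have hmemiff : ∀ ℓ, ℓ ∈ flatLocs (p :: l) ↔
          ℓ ∈ [p.1, p.2] ++ flatLocs l := by
        intro ℓ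
        simp [flatLocs, List.mem_append, List.mem_cons]
        tauto
      refine ⟨?_, ?_, ?_⟩
      · have h1 : SC R (eraseLocs (flatLocs l) Q₁) := ihSC
        have h2 : SC (eraseLocs (flatLocs l) Q₁)
            (eraseLocs (flatLocs l) (eraseLocs [p.1, p.2] P)) :=
          hSC.eraseLocs _
        rw [eraseLocs_eraseLocs] at h2
        rw [eraseLocs_congr hmemiff]
        exact h1.trans h2
      · have : ([p.1, p.2] ++ flatLocs l).Nodup := by
          refine List.Nodup.append (by simp [hne]) ihNodup ?_
          intro a ha hb; exact hQ₁loc a hb ha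
        have hperm : (flatLocs (p :: l)).Perm ([p.1, p.2] ++ flatLocs l) := by
          simp only [flatLocs, List.map_cons, List.cons_append]
          exact (List.perm_middle (a := p.2) (l₁ := l.map Prod.fst)
            (l₂ := l.map Prod.snd)).cons p.1
        exact hperm.nodup_iff.mpr this
      · intro ℓ hℓ
        rw [hmemiff] at hℓ
        rcases List.mem_append.mp hℓ with h | h
        · rcases List.mem_cons.mp h with rfl | h
          · exact hp1
          · simp only [List.mem_singleton] at h; subst h; exact hp2
        · have := ihMem ℓ h
          have := hSC.locList_perm.mem_iff.mp this
          rw [locList_eraseLocs, List.mem_filter] at this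
          exact this.1

/-- two executions of `P` realizing the same pairing are
permutations of each other, and reach structurally congruent terms. -/
theorem exec_same_pairing_perm (P Q R : Proc) (hWF : P.WF)
    (l l' : List (ℕ × ℕ)) (hQ : ExecL P l Q) (hR : ExecL P l' R)
    (hc : l.toFinset = l'.toFinset) : l.Perm l' ∧ SC Q R := by
  obtain ⟨hSCQ, hNodupQ, _⟩ := exec_residual hQ hWF
  obtain ⟨hSCR, hNodupR, _⟩ := exec_residual hR hWF
  have hmem : ∀ p : ℕ × ℕ, p ∈ l ↔ p ∈ l' := by
    intro p
    rw [← List.mem_toFinset, ← List.mem_toFinset, hc]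
  have hNl : l.Nodup := (List.nodup_append.mp hNodupQ).1.of_map
  have hNl' : l'.Nodup := (List.nodup_append.mp hNodupR).1.of_map
  have hperm : l.Perm l' := (List.perm_ext_iff_of_nodup hNl hNl').mpr hmem
  refine ⟨hperm, ?_⟩
  have : eraseLocs (flatLocs l) P = eraseLocs (flatLocs l') P := by
    apply eraseLocs_congr
    intro ℓ
    simp only [flatLocs, List.mem_append, List.mem_map]
    constructor <;> intro h <;>
      [(rcases h with ⟨p, hp, he⟩ | ⟨p, hp, he⟩);
       (rcases h with ⟨p, hp, he⟩ | ⟨p, hp, he⟩)]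
    · exact Or.inl ⟨p, (hmem p).1 hp, he⟩
    · exact Or.inr ⟨p, (hmem p).1 hp, he⟩
    · exact Or.inl ⟨p, (hmem p).2 hp, he⟩
    · exact Or.inr ⟨p, (hmem p).2 hp, he⟩
  exact hSCQ.trans (this ▸ hSCR.symm)
end

section
/- (Progress under asynchronous typing) If P is an MCCS term with at least one action prefix and ⌈P⌉ₐ ⊸ ⌈1⌉ₐ is provable in pure MLL for some instantiation of the propositional variables, then there exists a reduction P → Q such that ⌈Q⌉ₐ ⊸ ⌈1⌉ₐ is also provable in pure MLL. -/
/-! ### Auxiliary lemmas -/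

namespace Form

@[simp] theorem dual_dual (A : Form) : A.dual.dual = A := by
  induction A <;> simp [dual, *]

theorem subst_dual (σ : ℕ → Form) (A : Form) :
    (A.dual).subst σ = (A.subst σ).dual := by
  induction A <;> simp [dual, subst, *]

theorem subst_subst (σ τ : ℕ → Form) (A : Form) :
    (A.subst σ).subst τ = A.subst (fun i => (σ i).subst τ) := by
  induction A <;> simp [subst, subst_dual, *]

end Form

theorem Prov.perm {b : Bool} {Γ Δ : List Form} (h : Prov b Γ) (p : List.Perm Γ Δ) : Prov b Δ :=
  Prov.exch h p

theorem prov_ax2 (b : Bool) (A : Form) : Prov b [A, Form.dual A] :=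
  (Prov.ax b A).perm (List.Perm.swap A A.dual [])

theorem Prov.substP {b : Bool} {Γ : List Form} (h : Prov b Γ) (σ : ℕ → Form) :
    Prov b (Γ.map (Form.subst σ)) := by
  induction h with
  | ax b A => simpa [Form.subst_dual] using Prov.ax b (A.subst σ)
  | cut h1 h2 ih1 ih2 =>
      have := Prov.cut ih1 (by simpa [Form.subst_dual] using ih2)
      simpa using this
  | tens h1 h2 ih1 ih2 => simpa [Form.subst] using Prov.tens ih1 ih2
  | parr h ih => simpa [Form.subst] using Prov.parr ih
  | exch h p ih => exact ih.perm (p.map _)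
  | modp a h ih => simpa [Form.subst] using Prov.modp a (by simpa using ih)
  | modn a h ih => simpa [Form.subst] using Prov.modn a (by simpa using ih)

theorem prov_parr_inv {b : Bool} {A B : Form} {Γ : List Form}
    (h : Prov b (Form.parr A B :: Γ)) : Prov b (A :: B :: Γ) := by
  have hax : Prov b ((Form.parr A B).dual :: [A, B]) := by
    have := Prov.tens (Prov.ax b A) (Prov.ax b B)
    simpa [Form.dual] using this
  have := Prov.cut h hax
  exact this.perm List.perm_append_comm

/-! ### Structural congruence basics -/

theorem SC.size_eq {P Q : Proc} (h : SC P Q) : P.size = Q.size := by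
  induction h <;> simp [Proc.size, *] <;> omega

theorem step_sc {P P' : Proc} {p : ℕ × ℕ} {Q : Proc} (h : SC P P') (s : Step P' p Q) :
    Step P p Q := by
  obtain ⟨a, P₁, Q₁, R, h1, h2⟩ := s
  exact ⟨a, P₁, Q₁, R, h.trans h1, h2⟩

theorem ExecL.sc_left {P P' : Proc} {l : List (ℕ × ℕ)} {R : Proc}
    (h : SC P P') (e : ExecL P' l R) : ExecL P l R := by
  cases e with
  | refl h' => exact ExecL.refl (h.trans h')
  | step s e' => exact ExecL.step (step_sc h s) e'

theorem ExecL.to_one {P : Proc} {l : List (ℕ × ℕ)} {R : Proc}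
    (e : ExecL P l R) (h : SC R Proc.one) : ExecL P l Proc.one := by
  induction e with
  | refl h' => exact ExecL.refl (h'.trans h)
  | step s _ ih => exact ExecL.step s (ih h)

/-- `P` executes to the empty process. -/
def Red (P : Proc) : Prop := ∃ l, ExecL P l Proc.one

theorem Red.sc {P P' : Proc} (h : SC P P') (r : Red P') : Red P := by
  obtain ⟨l, e⟩ := r; exact ⟨l, e.sc_left h⟩

theorem Red.step {P : Proc} {p : ℕ × ℕ} {Q : Proc} (s : Step P p Q) (r : Red Q) : Red P := by
  obtain ⟨l, e⟩ := r; exact ⟨p :: l, ExecL.step s e⟩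

/-! ### Threads (multiset normal form for SC) -/

def threads : Proc → Multiset Proc
  | .one => 0
  | .par P Q => threads P + threads Q
  | .act b a ℓ P => {Proc.act b a ℓ P}

def TEq (s t : Proc) : Prop :=
  ∃ b a ℓ A B, s = Proc.act b a ℓ A ∧ t = Proc.act b a ℓ B ∧ SC A B

theorem TEq.sc {s t : Proc} (h : TEq s t) : SC s t := by
  obtain ⟨b, a, ℓ, A, B, rfl, rfl, h⟩ := h; exact SC.actCong b a ℓ h

theorem TEq.symm {s t : Proc} (h : TEq s t) : TEq t s := by
  obtain ⟨b, a, ℓ, A, B, rfl, rfl, h⟩ := h; exact ⟨b, a, ℓ, B, A, rfl, rfl, h.symm⟩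

theorem TEq.trans {s t u : Proc} (h1 : TEq s t) (h2 : TEq t u) : TEq s u := by
  obtain ⟨b, a, ℓ, A, B, rfl, rfl, h1⟩ := h1
  obtain ⟨b', a', ℓ', B', C, hBe, rfl, h2⟩ := h2
  cases hBe
  exact ⟨b, a, ℓ, A, C, rfl, rfl, h1.trans h2⟩

theorem rel_threads_refl (P : Proc) : Multiset.Rel TEq (threads P) (threads P) := by
  induction P with
  | one => exact Multiset.Rel.zero
  | par A B ihA ihB => exact Multiset.Rel.add ihA ihB
  | act b a ℓ A _ =>
      rw [threads, ← Multiset.cons_zero]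
      exact Multiset.Rel.cons ⟨b, a, ℓ, A, A, rfl, rfl, SC.refl A⟩ Multiset.Rel.zero

theorem rel_teq_symm {s t : Multiset Proc} (h : Multiset.Rel TEq s t) :
    Multiset.Rel TEq t s := by
  induction h with
  | zero => exact Multiset.Rel.zero
  | cons hab _ ih => exact Multiset.Rel.cons hab.symm ih

theorem rel_teq_trans {s t u : Multiset Proc} (h1 : Multiset.Rel TEq s t)
    (h2 : Multiset.Rel TEq t u) : Multiset.Rel TEq s u := by
  induction h1 generalizing u with
  | zero =>
      rw [Multiset.rel_zero_left] at h2; subst h2; exact Multiset.Rel.zero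
  | cons hab _ ih =>
      rcases Multiset.rel_cons_left.mp h2 with ⟨c, u', hbc, hr, rfl⟩
      exact Multiset.Rel.cons (hab.trans hbc) (ih hr)

theorem sc_rel {P Q : Proc} (h : SC P Q) : Multiset.Rel TEq (threads P) (threads Q) := by
  induction h with
  | refl P => exact rel_threads_refl P
  | symm _ ih => exact rel_teq_symm ih
  | trans _ _ ih1 ih2 => exact rel_teq_trans ih1 ih2
  | parComm P Q =>
      show Multiset.Rel TEq (threads P + threads Q) (threads Q + threads P)
      rw [add_comm (threads Q) (threads P)]
      exact Multiset.Rel.add (rel_threads_refl P) (rel_threads_refl Q)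
  | parAssoc P Q R =>
      show Multiset.Rel TEq (threads P + threads Q + threads R)
        (threads P + (threads Q + threads R))
      rw [add_assoc]
      exact Multiset.Rel.add (rel_threads_refl P)
        (Multiset.Rel.add (rel_threads_refl Q) (rel_threads_refl R))
  | parUnit P =>
      show Multiset.Rel TEq (0 + threads P) (threads P)
      rw [zero_add]; exact rel_threads_refl P
  | parCong _ _ ih1 ih2 => exact Multiset.Rel.add ih1 ih2
  | actCong b a ℓ h _ =>
      simp only [threads, ← Multiset.cons_zero]
      exact Multiset.Rel.cons ⟨b, a, ℓ, _, _, rfl, rfl, h⟩ Multiset.Rel.zero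

def threadsL : Proc → List Proc
  | .one => []
  | .par P Q => threadsL P ++ threadsL Q
  | .act b a ℓ P => [Proc.act b a ℓ P]

theorem threads_coe (P : Proc) : threads P = ↑(threadsL P) := by
  induction P <;> simp [threads, threadsL, *]

def plist : List Proc → Proc := fun l => l.foldr Proc.par Proc.one

theorem sc_act_par_one (X : Proc) : SC X (Proc.par X Proc.one) :=
  (SC.parUnit X).symm.trans (SC.parComm Proc.one X)

theorem sc_plist_append (l1 l2 : List Proc) :
    SC (plist (l1 ++ l2)) (Proc.par (plist l1) (plist l2)) := by
  induction l1 with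
  | nil => exact (SC.parUnit _).symm
  | cons a l ih =>
      exact SC.trans (SC.parCong (SC.refl a) ih) (SC.parAssoc a (plist l) (plist l2)).symm

theorem sc_threadsL (P : Proc) : SC P (plist (threadsL P)) := by
  induction P with
  | one => exact SC.refl _
  | par A B ihA ihB => exact SC.trans (SC.parCong ihA ihB) (sc_plist_append _ _).symm
  | act b a ℓ A _ => exact sc_act_par_one _

theorem forall₂_teq_plist {l l' : List Proc} (h : List.Forall₂ TEq l l') :
    SC (plist l) (plist l') := by
  induction h with
  | nil => exact SC.refl _
  | cons hab _ ih => exact SC.parCong hab.sc ih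

theorem perm_plist {l l' : List Proc} (h : l.Perm l') : SC (plist l) (plist l') := by
  induction h with
  | nil => exact SC.refl _
  | cons x _ ih => exact SC.parCong (SC.refl x) ih
  | swap x y l =>
      exact ((SC.parAssoc y x (plist l)).symm.trans
        (SC.parCong (SC.parComm y x) (SC.refl (plist l)))).trans (SC.parAssoc x y (plist l))
  | trans _ _ ih1 ih2 => exact ih1.trans ih2

theorem rel_coe_exists {r : Proc → Proc → Prop} {l : List Proc} {t : Multiset Proc}
    (h : Multiset.Rel r ↑l t) : ∃ l', List.Forall₂ r l l' ∧ ↑l' = t := by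
  induction l generalizing t with
  | nil =>
      rw [Multiset.coe_nil, Multiset.rel_zero_left] at h
      exact ⟨[], List.Forall₂.nil, by simp [h]⟩
  | cons a l ih =>
      rw [← Multiset.cons_coe] at h
      rcases Multiset.rel_cons_left.mp h with ⟨c, t', hac, hr, rfl⟩
      rcases ih hr with ⟨l', h2, ht⟩
      exact ⟨c :: l', List.Forall₂.cons hac h2, by rw [← Multiset.cons_coe, ht]⟩

theorem rel_sc {P Q : Proc} (h : Multiset.Rel TEq (threads P) (threads Q)) : SC P Q := by
  rw [threads_coe, threads_coe] at h
  rcases rel_coe_exists h with ⟨l', h2, hl⟩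
  have p : l'.Perm (threadsL Q) := Multiset.coe_eq_coe.mp hl
  exact ((sc_threadsL P).trans (forall₂_teq_plist h2)).trans
    ((perm_plist p).trans (sc_threadsL Q).symm)

theorem threads_decomp {Rr y : Proc} (h : y ∈ threads Rr) :
    ∃ Rr', SC Rr (Proc.par y Rr') ∧ threads Rr = y ::ₘ threads Rr' := by
  induction Rr with
  | one => simp [threads] at h
  | act b a ℓ A _ =>
      simp only [threads, Multiset.mem_singleton] at h
      subst h
      exact ⟨Proc.one, sc_act_par_one _, by simp [threads]⟩
  | par A B ihA ihB =>
      rw [threads, Multiset.mem_add] at h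
      rcases h with h | h
      · rcases ihA h with ⟨A', hsc, ht⟩
        refine ⟨Proc.par A' B, (SC.parCong hsc (SC.refl B)).trans (SC.parAssoc y A' B), ?_⟩
        rw [threads, ht, threads, Multiset.cons_add]
      · rcases ihB h with ⟨B', hsc, ht⟩
        refine ⟨Proc.par A B', ?_, ?_⟩
        · exact (SC.parCong (SC.refl A) hsc).trans
            ((SC.parAssoc A y B').symm.trans
              ((SC.parCong (SC.parComm A y) (SC.refl B')).trans (SC.parAssoc y A B')))
        · rw [threads, ht, threads, ← Multiset.singleton_add, ← Multiset.singleton_add,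
            add_left_comm]

theorem sc_of_threads {P Q : Proc} (h : threads P = threads Q) : SC P Q :=
  rel_sc (h ▸ rel_threads_refl P)

theorem guard_release {l : List (ℕ × ℕ)} :
    ∀ {b : Bool} {a ℓ : ℕ} {X U A W : Proc}, SC X (.par A W) →
      ExecL (.par (.act b a ℓ X) U) l .one →
      ∀ ℓ', Red (.par (.act b a ℓ' A) (.par W U)) := by
  induction l with
  | nil =>
      intro b a ℓ X U A W hX e ℓ'
      cases e with
      | refl h =>
          have := h.size_eq
          simp [Proc.size] at this
  | cons p l ih =>
      intro b a ℓ X U A W hX e ℓ'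
      cases e with
      | step s e' =>
          rename_i Qnext
          obtain ⟨c, P₁, Q₁, Rr, h1, h2⟩ := s
          have hrel := sc_rel h1
          simp only [threads, Multiset.singleton_add] at hrel
          rcases Multiset.rel_cons_left.mp hrel with ⟨y, t', hy, hrU, heq⟩
          obtain ⟨b0, a0, ℓ0, A0, B0, hXeq, hyeq, hAB⟩ := hy
          injection hXeq with e1 e2 e3 e4
          subst e1; subst e2; subst e3; subst e4; subst hyeq
          have hB0 : SC B0 (.par A W) := hAB.symm.trans hX
          have hmem : (Proc.act b a ℓ B0) ∈
              ((Proc.act true c p.1 P₁) ::ₘ (Proc.act false c p.2 Q₁) ::ₘ threads Rr) := by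
            rw [heq]; exact Multiset.mem_cons_self _ _
          rcases Multiset.mem_cons.mp hmem with hy1 | hmem2
          · -- our thread is the positive prefix of the redex
            injection hy1 with f1 f2 f3 f4
            subst f1; subst f2; subst f3; subst f4
            have ht' := (Multiset.cons_inj_right _).mp heq
            have hU : SC U (.par (.act false a p.2 Q₁) Rr) := by
              refine rel_sc ?_
              simp only [threads, Multiset.singleton_add]
              rw [ht']; exact hrU
            have hsc1 : SC (.par (.act true a ℓ' A) (.par W U))
                (.par (.act true a ℓ' A) (.par (.act false a p.2 Q₁) (.par W Rr))) := by
              refine SC.parCong (SC.refl _) ?_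
              refine (SC.parCong (SC.refl W) hU).trans (sc_of_threads ?_)
              simp [threads, add_comm, add_left_comm, add_assoc]
            have s' : Step (.par (.act true a ℓ' A) (.par W U)) (ℓ', p.2)
                (.par A (.par Q₁ (.par W Rr))) :=
              ⟨a, A, Q₁, .par W Rr, hsc1, SC.refl _⟩
            have hQn : SC Qnext (.par A (.par Q₁ (.par W Rr))) := by
              refine h2.trans ((SC.parCong hB0 (SC.refl _)).trans (sc_of_threads ?_))
              simp [threads, add_comm, add_left_comm, add_assoc]
            exact Red.step s' (Red.sc hQn.symm ⟨l, e'⟩)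
          · rcases Multiset.mem_cons.mp hmem2 with hy2 | hy3
            · -- our thread is the negative prefix of the redex
              injection hy2 with f1 f2 f3 f4
              subst f1; subst f2; subst f3; subst f4
              rw [Multiset.cons_swap] at heq
              have ht' := (Multiset.cons_inj_right _).mp heq
              have hU : SC U (.par (.act true a p.1 P₁) Rr) := by
                refine rel_sc ?_
                simp only [threads, Multiset.singleton_add]
                rw [ht']; exact hrU
              have hsc1 : SC (.par (.act false a ℓ' A) (.par W U))
                  (.par (.act true a p.1 P₁) (.par (.act false a ℓ' A) (.par W Rr))) := by
                refine ((SC.parCong (SC.refl _) (SC.parCong (SC.refl W) hU)).trans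
                  (sc_of_threads ?_))
                simp [threads, add_comm, add_left_comm, add_assoc]
              have s' : Step (.par (.act false a ℓ' A) (.par W U)) (p.1, ℓ')
                  (.par P₁ (.par A (.par W Rr))) :=
                ⟨a, P₁, A, .par W Rr, hsc1, SC.refl _⟩
              have hQn : SC Qnext (.par P₁ (.par A (.par W Rr))) := by
                refine h2.trans ((SC.parCong (SC.refl _) (SC.parCong hB0 (SC.refl _))).trans
                  (sc_of_threads ?_))
                simp [threads, add_comm, add_left_comm, add_assoc]
              exact Red.step s' (Red.sc hQn.symm ⟨l, e'⟩)
            · -- our thread is a bystander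
              obtain ⟨Rr', hscRr, htr⟩ := threads_decomp hy3
              rw [htr, Multiset.cons_swap (Proc.act false c p.2 Q₁),
                Multiset.cons_swap (Proc.act true c p.1 P₁)] at heq
              have ht' := (Multiset.cons_inj_right _).mp heq
              have hU : SC U (.par (.act true c p.1 P₁) (.par (.act false c p.2 Q₁) Rr')) := by
                refine rel_sc ?_
                simp only [threads, Multiset.singleton_add]
                rw [ht']; exact hrU
              have hQn : SC Qnext (.par (.act b a ℓ B0) (.par P₁ (.par Q₁ Rr'))) := by
                refine h2.trans ((SC.parCong (SC.refl P₁)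
                  (SC.parCong (SC.refl Q₁) hscRr)).trans (sc_of_threads ?_))
                simp [threads, add_comm, add_left_comm, add_assoc]
              have e'' : ExecL (.par (.act b a ℓ B0) (.par P₁ (.par Q₁ Rr'))) l .one :=
                ExecL.sc_left hQn.symm e'
              have hred := ih hB0 e'' ℓ'
              have hsc1 : SC (.par (.act b a ℓ' A) (.par W U))
                  (.par (.act true c p.1 P₁) (.par (.act false c p.2 Q₁)
                    (.par (.act b a ℓ' A) (.par W Rr')))) := by
                refine ((SC.parCong (SC.refl _) (SC.parCong (SC.refl W) hU)).trans
                  (sc_of_threads ?_))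
                simp [threads, add_comm, add_left_comm, add_assoc]
                rw [Multiset.cons_swap]
              have s' : Step (.par (.act b a ℓ' A) (.par W U)) (p.1, p.2)
                  (.par P₁ (.par Q₁ (.par (.act b a ℓ' A) (.par W Rr')))) :=
                ⟨c, P₁, Q₁, .par (.act b a ℓ' A) (.par W Rr'), hsc1, SC.refl _⟩
              refine Red.step s' (Red.sc (sc_of_threads ?_) hred)
              simp [threads, add_comm, add_left_comm, add_assoc]

/-! ### The phase model over processes -/

instance procSetoid : Setoid Proc :=
  ⟨SC, ⟨SC.refl, fun h => h.symm, fun h1 h2 => h1.trans h2⟩⟩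

abbrev M : Type := Quotient procSetoid

instance : CommMonoid M where
  mul := Quotient.map₂ Proc.par (fun _ _ h1 _ _ h2 => SC.parCong h1 h2)
  one := Quotient.mk procSetoid Proc.one
  mul_assoc := by
    rintro ⟨a⟩ ⟨b⟩ ⟨c⟩; exact Quotient.sound (SC.parAssoc a b c)
  one_mul := by rintro ⟨a⟩; exact Quotient.sound (SC.parUnit a)
  mul_one := by
    rintro ⟨a⟩; exact Quotient.sound ((SC.parComm a Proc.one).trans (SC.parUnit a))
  mul_comm := by rintro ⟨a⟩ ⟨b⟩; exact Quotient.sound (SC.parComm a b)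

abbrev mk (P : Proc) : M := Quotient.mk procSetoid P

theorem mk_mul (P Q : Proc) : mk P * mk Q = mk (Proc.par P Q) := rfl

def BotS : Set M := fun m =>
  Quotient.liftOn m Red (fun _ _ h => propext ⟨fun r => r.sc h.symm, fun r => r.sc h⟩)

theorem mk_mem_BotS {P : Proc} : mk P ∈ BotS ↔ Red P := Iff.rfl

theorem one_mem_BotS : (1 : M) ∈ BotS := ⟨[], ExecL.refl (SC.refl _)⟩

def Dua (S : Set M) : Set M := {m | ∀ x ∈ S, m * x ∈ BotS}

theorem subset_dd (S : Set M) : S ⊆ Dua (Dua S) := fun x hx m hm => by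
  rw [mul_comm]; exact hm x hx

theorem dua_anti {S T : Set M} (h : S ⊆ T) : Dua T ⊆ Dua S := fun m hm x hx => hm x (h hx)

theorem dua_dua_dua (S : Set M) : Dua (Dua (Dua S)) = Dua S :=
  subset_antisymm (dua_anti (subset_dd S)) (subset_dd (Dua S))

theorem dua_image2_dd (S T : Set M) :
    Dua (Set.image2 (· * ·) (Dua (Dua S)) (Dua (Dua T))) = Dua (Set.image2 (· * ·) S T) := by
  apply subset_antisymm
  · exact dua_anti (Set.image2_subset (subset_dd S) (subset_dd T))
  · intro m hm z hz
    rcases hz with ⟨x, hx, y, hy, rfl⟩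
    have h1 : ∀ t ∈ T, m * t ∈ Dua S := by
      intro t ht s hs
      have h0 := hm (s * t) (Set.mem_image2_of_mem hs ht)
      have e : m * t * s = m * (s * t) := by rw [mul_assoc, mul_comm t s]
      rw [e]; exact h0
    have h2 : x * m ∈ Dua T := by
      intro t ht
      have h0 := hx (m * t) (h1 t ht)
      rw [mul_assoc]; exact h0
    have h3 := hy (x * m) h2
    have e : m * (x * y) = y * (x * m) := by
      rw [mul_comm x y, mul_comm m (y * x), mul_assoc]
    rw [e]; exact h3

def gbar (a : ℕ) : M → M :=
  Quotient.map (Proc.act false a 0) (fun _ _ h => SC.actCong _ _ _ h)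

def interp (v : ℕ → Set M) : Form → Set M
  | .pv n => Dua (Dua (v n))
  | .nv n => Dua (v n)
  | .tens A B => Dua (Dua (Set.image2 (· * ·) (interp v A) (interp v B)))
  | .parr A B => Dua (Set.image2 (· * ·) (Dua (interp v A)) (Dua (interp v B)))
  | .modp a A => Dua ((gbar a) '' (Dua (interp v A)))
  | .modn a A => Dua (Dua ((gbar a) '' (Dua (Dua (interp v A)))))

theorem interp_dd (v : ℕ → Set M) (A : Form) : Dua (Dua (interp v A)) = interp v A := by
  cases A <;> simp only [interp, dua_dua_dua]

theorem interp_dual (v : ℕ → Set M) (A : Form) : interp v A.dual = Dua (interp v A) := by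
  induction A with
  | pv n => simp only [Form.dual, interp, dua_dua_dua]
  | nv n => simp only [Form.dual, interp]
  | tens A B ihA ihB =>
      simp only [Form.dual, interp, ihA, ihB, dua_dua_dua, dua_image2_dd]
  | parr A B ihA ihB =>
      simp only [Form.dual, interp, ihA, ihB, dua_dua_dua]
  | modp a A ih => simp only [Form.dual, interp, ih, dua_dua_dua]
  | modn a A ih => simp only [Form.dual, interp, ih, dua_dua_dua]

theorem interp_subst (v : ℕ → Set M) (σ : ℕ → Form) (A : Form) :
    interp v (A.subst σ) = interp (fun n => interp v (σ n)) A := by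
  induction A with
  | pv n => simp only [Form.subst, interp, interp_dd]
  | nv n => simp only [Form.subst, interp, interp_dual]
  | tens A B ihA ihB => simp only [Form.subst, interp, ihA, ihB]
  | parr A B ihA ihB => simp only [Form.subst, interp, ihA, ihB]
  | modp a A ih => simp only [Form.subst, interp, ih]
  | modn a A ih => simp only [Form.subst, interp, ih]

/-! ### Soundness of pure MLL for the phase model -/

theorem forall₂_append_split {α β : Type _} {r : α → β → Prop} {Γ Δ : List α} {ms : List β}
    (h : List.Forall₂ r (Γ ++ Δ) ms) :
    ∃ ms₁ ms₂, ms = ms₁ ++ ms₂ ∧ List.Forall₂ r Γ ms₁ ∧ List.Forall₂ r Δ ms₂ := by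
  induction Γ generalizing ms with
  | nil => exact ⟨[], ms, rfl, List.Forall₂.nil, h⟩
  | cons a Γ ih =>
      rcases List.forall₂_cons_left_iff.mp h with ⟨b, ms', hab, h', rfl⟩
      rcases ih h' with ⟨ms₁, ms₂, rfl, h1, h2⟩
      exact ⟨b :: ms₁, ms₂, rfl, List.Forall₂.cons hab h1, h2⟩

theorem forall₂_perm_left {α β : Type _} {r : α → β → Prop} {Γ Δ : List α} {ms : List β}
    (p : Γ.Perm Δ) (h : List.Forall₂ r Δ ms) :
    ∃ ms', List.Forall₂ r Γ ms' ∧ ms'.Perm ms := by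
  induction p generalizing ms with
  | nil => exact ⟨ms, h, List.Perm.refl ms⟩
  | cons x p ih =>
      rcases List.forall₂_cons_left_iff.mp h with ⟨b, ms', hxb, h', rfl⟩
      rcases ih h' with ⟨ms'', h'', hp⟩
      exact ⟨b :: ms'', List.Forall₂.cons hxb h'', hp.cons b⟩
  | swap x y l =>
      rcases List.forall₂_cons_left_iff.mp h with ⟨b1, ms1, hxb, h1, rfl⟩
      rcases List.forall₂_cons_left_iff.mp h1 with ⟨b2, ms2, hyb, h2, rfl⟩
      exact ⟨b2 :: b1 :: ms2, List.Forall₂.cons hyb (List.Forall₂.cons hxb h2),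
        List.Perm.swap b1 b2 ms2⟩
  | trans p1 p2 ih1 ih2 =>
      rcases ih2 h with ⟨ms', h', hp'⟩
      rcases ih1 h' with ⟨ms'', h'', hp''⟩
      exact ⟨ms'', h'', hp''.trans hp'⟩

def SOk (v : ℕ → Set M) (Γ : List Form) : Prop :=
  ∀ ms : List M, List.Forall₂ (fun A m => m ∈ Dua (interp v A)) Γ ms → ms.prod ∈ BotS

theorem soundness {b : Bool} {Γ : List Form} (h : Prov b Γ) (hb : b = false)
    (v : ℕ → Set M) : SOk v Γ := by
  induction h with
  | ax b A =>
      intro ms hms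
      rcases List.forall₂_cons_left_iff.mp hms with ⟨m1, ms1, hm1, hms1, rfl⟩
      rcases List.forall₂_cons_left_iff.mp hms1 with ⟨m2, ms2, hm2, hms2, rfl⟩
      rw [List.forall₂_nil_left_iff] at hms2; subst hms2
      rw [interp_dual] at hm1
      simpa using hm1 m2 hm2
  | cut h1 h2 ih1 ih2 =>
      intro ms hms
      rcases forall₂_append_split hms with ⟨ms₁, ms₂, rfl, hA, hB⟩
      rename_i A Γ Δ
      have hu : ms₂.prod ∈ Dua (interp v A) := by
        rw [← dua_dua_dua]
        intro x hx
        rw [← interp_dual] at hx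
        have := ih2 hb (x :: ms₂) (List.Forall₂.cons hx hB)
        simpa [mul_comm] using this
      have := ih1 hb (ms₂.prod :: ms₁) (List.Forall₂.cons hu hA)
      simpa [List.prod_append, mul_comm] using this
  | tens h1 h2 ih1 ih2 =>
      intro ms hms
      rcases List.forall₂_cons_left_iff.mp hms with ⟨m0, ms', hm0, hms', rfl⟩
      rcases forall₂_append_split hms' with ⟨ms₁, ms₂, rfl, hA, hB⟩
      rename_i A B Γ Δ
      have hu1 : ms₁.prod ∈ Dua (Dua (interp v A)) := by
        intro x hx
        have := ih1 hb (x :: ms₁) (List.Forall₂.cons hx hA)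
        simpa [mul_comm] using this
      have hu2 : ms₂.prod ∈ Dua (Dua (interp v B)) := by
        intro x hx
        have := ih2 hb (x :: ms₂) (List.Forall₂.cons hx hB)
        simpa [mul_comm] using this
      have hm0' : m0 ∈ Dua (Set.image2 (· * ·) (Dua (Dua (interp v A)))
          (Dua (Dua (interp v B)))) := by
        rw [dua_image2_dd]
        simpa only [interp, dua_dua_dua] using hm0
      have := hm0' (ms₁.prod * ms₂.prod) (Set.mem_image2_of_mem hu1 hu2)
      simpa [List.prod_cons, List.prod_append, mul_assoc] using this
  | parr h ih =>
      intro ms hms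
      rcases List.forall₂_cons_left_iff.mp hms with ⟨m0, ms', hm0, hms', rfl⟩
      rename_i A B Γ
      have hp : ms'.prod ∈ Dua (Set.image2 (· * ·) (Dua (interp v A)) (Dua (interp v B))) := by
        intro z hz
        rcases hz with ⟨x, hx, y, hy, rfl⟩
        have h0 := ih hb (x :: y :: ms') (List.Forall₂.cons hx (List.Forall₂.cons hy hms'))
        simp only [List.prod_cons] at h0
        have e : ms'.prod * (x * y) = x * (y * ms'.prod) := by
          rw [mul_comm, mul_assoc]
        rw [e]; exact h0
      have := hm0 ms'.prod hp
      simpa [List.prod_cons] using this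
  | exch h p ih =>
      intro ms hms
      rcases forall₂_perm_left p hms with ⟨ms', h', hp⟩
      have := ih hb ms' h'
      rwa [hp.prod_eq] at this
  | modp a h ih => exact absurd hb (by simp_all)
  | modn a h ih => exact absurd hb (by simp_all)

/-! ### Adequacy -/

theorem adequacy (P : Proc) : ∀ (n : ℕ) (v : ℕ → Set M), mk P ∈ interp v (tAA P n).1 := by
  induction P with
  | one =>
      intro n v
      simp only [tAA, interp]
      intro z hz
      rcases hz with ⟨x, hx, y, hy, rfl⟩
      have h0 := hy x hx
      have e : mk Proc.one * (x * y) = y * x := by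
        rw [show (mk Proc.one : M) = 1 from rfl, one_mul, mul_comm]
      rw [e]; exact h0
  | par A B ihA ihB =>
      intro n v
      simp only [tAA, interp]
      have h0 := Set.mem_image2_of_mem (f := (· * ·)) (ihA n v) (ihB (tAA A n).2 v)
      exact subset_dd _ (by simpa [mk_mul] using h0)
  | act b a ℓ A ih =>
      cases b with
      | true =>
          intro n v
          simp only [tAA, interp, dua_dua_dua]
          intro z hz
          rcases hz with ⟨u, hu, w, hw, rfl⟩
          obtain ⟨U, rfl⟩ := Quotient.exists_rep u
          obtain ⟨W, rfl⟩ := Quotient.exists_rep w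
          have key : mk (Proc.act true a ℓ A) * (mk W) ∈
              Dua ((gbar a) '' (Dua (Dua (v n)))) := by
            rintro g ⟨k, hk, rfl⟩
            obtain ⟨K, rfl⟩ := Quotient.exists_rep k
            refine mk_mem_BotS.mpr ?_
            refine Red.step (p := (ℓ, 0)) ⟨a, A, K, W, ?_, SC.refl _⟩ ?_
            · exact sc_of_threads (by
                simp [threads, add_comm, add_left_comm, add_assoc])
            · have h0 := hw (mk A * mk K) (Set.mem_image2_of_mem (f := (· * ·)) (ih (n+1) v) hk)
              have h0' : Red (Proc.par W (Proc.par A K)) := mk_mem_BotS.mp h0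
              exact h0'.sc (sc_of_threads (by
                simp [threads, add_comm, add_left_comm, add_assoc]))
          rw [mul_left_comm]
          exact hu _ key
      | false =>
          intro n v
          simp only [tAA, interp, dua_dua_dua]
          intro z hz
          rcases hz with ⟨w, hw, u, hu, rfl⟩
          obtain ⟨W, rfl⟩ := Quotient.exists_rep w
          obtain ⟨U, rfl⟩ := Quotient.exists_rep u
          have key : mk A * (mk W) ∈ Dua (Dua (v n)) := by
            intro j hj
            have h0 := hw (mk A * j) (Set.mem_image2_of_mem (f := (· * ·)) (ih (n+1) v) hj)
            have e : mk A * mk W * j =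
                mk W * (mk A * j) := by
              rw [mul_comm (mk A) (mk W), mul_assoc]
            rw [e]; exact h0
          have gmem := Set.mem_image_of_mem (gbar a) key
          have h1 := hu _ gmem
          have h1' : Red (Proc.par U (Proc.act false a 0 (Proc.par A W))) :=
            mk_mem_BotS.mp h1
          obtain ⟨l, e⟩ := h1'.sc (SC.parComm (Proc.act false a 0 (Proc.par A W)) U)
          have hg := guard_release (SC.refl (Proc.par A W)) e ℓ
          exact mk_mem_BotS.mpr hg
  
/-! ### From provability to execution -/

theorem one_mem_dua {S : Set M} (h : S ⊆ BotS) : (1 : M) ∈ Dua S := fun x hx => by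
  rw [one_mul]; exact h hx

theorem aimp_red {P : Proc} (h : AImp P Proc.one) : Red P := by
  obtain ⟨σ, hp⟩ := h
  have hs := soundness hp rfl (fun _ => {(1 : M)})
  set v0 : ℕ → Set M := fun _ => {(1 : M)} with hv0
  have d1 : ({(1 : M)} : Set M) ⊆ BotS := by
    intro x hx; rw [Set.mem_singleton_iff] at hx; subst hx; exact one_mem_BotS
  have h1 : (1 : M) ∈ Dua {(1 : M)} := one_mem_dua d1
  have h2 : Dua (Dua ({(1 : M)} : Set M)) ⊆ BotS := fun x hx => by
    have := hx 1 h1; rwa [mul_one] at this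
  have h3 : (1 : M) ∈ Dua (Dua ({(1 : M)} : Set M)) :=
    one_mem_dua (fun z hz => by have := hz 1 rfl; rwa [mul_one] at this)
  have h4 : (1 : M) ∈ Dua (Dua (Dua ({(1 : M)} : Set M))) := one_mem_dua h2
  have hI : (1 : M) ∈ Dua (interp v0 (tAA Proc.one (tAA P 0).2).1) := by
    simp only [tAA, interp, hv0]
    refine one_mem_dua ?_
    intro t ht
    have := ht (1 * 1) (Set.mem_image2_of_mem (f := (· * ·)) h3 h4)
    rwa [mul_one, mul_one] at this
  have hC : mk P ∈ Dua (interp v0 (((tAA P 0).1.subst σ).dual)) := by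
    rw [interp_dual]
    refine subset_dd _ ?_
    rw [interp_subst]
    exact adequacy P 0 _
  have hmem : mk P ∈ Dua (interp v0
      (Form.parr ((tAA P 0).1.subst σ).dual (tAA Proc.one (tAA P 0).2).1)) := by
    simp only [interp]
    refine subset_dd _ ?_
    have h5 := Set.mem_image2_of_mem (f := (· * ·)) hC hI
    simpa [tAA, interp, mul_one, dua_dua_dua] using h5
  have := hs [mk P] (List.Forall₂.cons hmem List.Forall₂.nil)
  simp only [List.prod_cons, List.prod_nil, mul_one] at this
  exact mk_mem_BotS.mp this

/-! ### Variable bookkeeping for tAA -/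

theorem tAA_shift (P : Proc) : ∀ n k : ℕ,
    (tAA P (n + k)).1 = ((tAA P n).1).subst (fun i => Form.pv (i + k)) ∧
    (tAA P (n + k)).2 = (tAA P n).2 + k := by
  induction P with
  | one => intro n k; constructor <;> simp [tAA, Form.subst, Form.dual] <;> omega
  | par A B ihA ihB =>
      intro n k
      obtain ⟨hA1, hA2⟩ := ihA n k
      obtain ⟨hB1, hB2⟩ := ihB (tAA A n).2 k
      constructor
      · simp only [tAA, hA1, hA2, hB1, Form.subst]
      · simp only [tAA, hA2, hB2]
  | act b a ℓ A ih =>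
      intro n k
      obtain ⟨hA1, hA2⟩ := ih (n + 1) k
      cases b
      · constructor
        · simp only [tAA]
          rw [show n + k + 1 = n + 1 + k by omega, hA1]
          simp [Form.subst, Form.dual]
        · simp only [tAA]
          rw [show n + k + 1 = n + 1 + k by omega, hA2]
      · constructor
        · simp only [tAA]
          rw [show n + k + 1 = n + 1 + k by omega, hA1]
          simp [Form.subst, Form.dual]
        · simp only [tAA]
          rw [show n + k + 1 = n + 1 + k by omega, hA2]

theorem tAA_at (P : Proc) (k : ℕ) (σ : ℕ → Form) :
    ((tAA P k).1).subst σ = ((tAA P 0).1).subst (fun i => σ (i + k)) := by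
  have h := (tAA_shift P 0 k).1
  rw [Nat.zero_add] at h
  rw [h, Form.subst_subst]
  rfl

theorem tAA_snd_at (P : Proc) (k : ℕ) : (tAA P k).2 = (tAA P 0).2 + k := by
  have h := (tAA_shift P 0 k).2
  rwa [Nat.zero_add] at h

theorem tAA_le (P : Proc) : ∀ n, n ≤ (tAA P n).2 := by
  induction P with
  | one => intro n; simp [tAA]
  | par A B ihA ihB =>
      intro n
      exact le_trans (ihA n) (by simpa [tAA] using ihB (tAA A n).2)
  | act b a ℓ A ih =>
      intro n
      have := ih (n + 1)
      cases b <;> simp only [tAA] <;> omega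

theorem tAA_agree (P : Proc) : ∀ (n : ℕ) (σ σ' : ℕ → Form),
    (∀ i, n ≤ i → i < (tAA P n).2 → σ i = σ' i) →
    ((tAA P n).1).subst σ = ((tAA P n).1).subst σ' := by
  induction P with
  | one =>
      intro n σ σ' h
      have := h n le_rfl (by simp [tAA])
      simp [tAA, Form.subst, this]
  | par A B ihA ihB =>
      intro n σ σ' h
      have hle := tAA_le B (tAA A n).2
      simp only [tAA, Form.subst]
      rw [ihA n σ σ' (fun i h1 h2 => h i h1 (by simp only [tAA]; omega)),
        ihB (tAA A n).2 σ σ' (fun i h1 h2 => h i (le_trans (tAA_le A n) h1) (by simp only [tAA]; omega))]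
  | act b a ℓ A ih =>
      intro n σ σ' h
      have hle := tAA_le A (n + 1)
      have h0 : σ n = σ' n := h n le_rfl (by cases b <;> simp only [tAA] <;> omega)
      have h1 := ih (n + 1) σ σ' (fun i hi1 hi2 => h i (by omega) (by cases b <;> simp only [tAA] <;> omega))
      cases b <;> simp only [tAA, Form.subst] <;> rw [h0, h1]

/-! ### MLL implications between translations of congruent processes -/

theorem perm_r3 {α : Type _} (a b c : α) (l : List α) :
    (a :: b :: c :: l).Perm (b :: c :: a :: l) :=
  (List.Perm.swap b a (c :: l)).trans ((List.Perm.swap c a l).cons b)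

theorem perm_r4 {α : Type _} (a b c d : α) (l : List α) :
    (a :: b :: c :: d :: l).Perm (b :: c :: d :: a :: l) :=
  (perm_r3 a b c (d :: l)).trans (((List.Perm.swap d a l).cons c).cons b)

def Dir (P Q : Proc) : Prop :=
  ∀ σ' : ℕ → Form, ∃ σ : ℕ → Form,
    Prov false [(((tAA P 0).1).subst σ).dual, ((tAA Q 0).1).subst σ']

theorem dir_refl (P : Proc) : Dir P P := fun σ' => ⟨σ', Prov.ax false _⟩

theorem dir_trans {P Q R : Proc} (h1 : Dir P Q) (h2 : Dir Q R) : Dir P R := by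
  intro σ'
  obtain ⟨σq, hq⟩ := h2 σ'
  obtain ⟨σp, hp⟩ := h1 σq
  refine ⟨σp, ?_⟩
  have := Prov.cut (hp.perm (List.Perm.swap _ _ [])) hq
  simpa using this

theorem dir_parComm (P Q : Proc) : Dir (.par P Q) (.par Q P) := by
  intro σ'
  set cP := (tAA P 0).2 with hcP
  set cQ := (tAA Q 0).2 with hcQ
  set σ0 : ℕ → Form := fun i => if i < cP then σ' (i + cQ) else σ' (i - cP) with hσ0
  refine ⟨σ0, ?_⟩
  set A := ((tAA P cQ).1).subst σ' with hA
  set B := ((tAA Q 0).1).subst σ' with hB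
  have e1 : ((tAA P 0).1).subst σ0 = A := by
    rw [hA]
    conv_rhs => rw [tAA_at]
    exact tAA_agree P 0 _ _ (fun i h1 h2 => by simp only [hσ0]; rw [if_pos h2])
  have e2 : ((tAA Q cP).1).subst σ0 = B := by
    rw [tAA_at, hB]
    refine tAA_agree Q 0 _ _ (fun i h1 h2 => ?_)
    simp only [hσ0]
    rw [if_neg (by omega)]
    congr 1
    omega
  simp only [tAA, Form.subst, Form.dual]
  rw [e1, e2]
  have t1 : Prov false [Form.tens B A, B.dual, A.dual] :=
    Prov.tens (prov_ax2 false B) (prov_ax2 false A)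
  have t2 : Prov false [A.dual, B.dual, Form.tens B A] :=
    t1.perm ((perm_r3 _ _ _ []).trans (List.Perm.swap _ _ _))
  exact Prov.parr t2

theorem dir_parAssoc1 (P Q R : Proc) :
    Dir (.par (.par P Q) R) (.par P (.par Q R)) := by
  intro σ'
  refine ⟨σ', ?_⟩
  simp only [tAA, Form.subst, Form.dual]
  set A := ((tAA P 0).1).subst σ'
  set B := ((tAA Q (tAA P 0).2).1).subst σ'
  set C := ((tAA R (tAA Q (tAA P 0).2).2).1).subst σ'
  have t1 : Prov false [Form.tens B C, B.dual, C.dual] :=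
    Prov.tens (prov_ax2 false B) (prov_ax2 false C)
  have t2 : Prov false [Form.tens A (Form.tens B C), A.dual, B.dual, C.dual] :=
    Prov.tens (prov_ax2 false A) t1
  have t3 : Prov false [A.dual, B.dual, C.dual, Form.tens A (Form.tens B C)] :=
    t2.perm (perm_r4 _ _ _ _ [])
  exact Prov.parr (Prov.parr t3)

theorem dir_parAssoc2 (P Q R : Proc) :
    Dir (.par P (.par Q R)) (.par (.par P Q) R) := by
  intro σ'
  refine ⟨σ', ?_⟩
  simp only [tAA, Form.subst, Form.dual]
  set A := ((tAA P 0).1).subst σ'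
  set B := ((tAA Q (tAA P 0).2).1).subst σ'
  set C := ((tAA R (tAA Q (tAA P 0).2).2).1).subst σ'
  have t1 : Prov false [Form.tens A B, A.dual, B.dual] :=
    Prov.tens (prov_ax2 false A) (prov_ax2 false B)
  have t2 : Prov false [Form.tens (Form.tens A B) C, A.dual, B.dual, C.dual] :=
    Prov.tens t1 (prov_ax2 false C)
  have t3 : Prov false [A.dual, B.dual, C.dual, Form.tens (Form.tens A B) C] :=
    t2.perm (perm_r4 _ _ _ _ [])
  have t4 : Prov false [B.dual, C.dual, A.dual, Form.tens (Form.tens A B) C] :=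
    t3.perm (perm_r3 _ _ _ _)
  have t5 := Prov.parr t4
  have t6 : Prov false [A.dual, Form.parr B.dual C.dual, Form.tens (Form.tens A B) C] :=
    t5.perm (List.Perm.swap _ _ _)
  exact Prov.parr t6

theorem dir_parUnit1 (P : Proc) : Dir (.par .one P) P := by
  intro σ'
  set B := ((tAA P 0).1).subst σ' with hB
  set σ0 : ℕ → Form := fun i => if i = 0 then B.dual else σ' (i - 1) with hσ0
  refine ⟨σ0, ?_⟩
  have e1 : ((tAA P 1).1).subst σ0 = B := by
    have h := tAA_at P 1 σ0
    rw [h, hB]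
    refine tAA_agree P 0 _ _ (fun i h1 h2 => ?_)
    simp [hσ0]
  have e0 : σ0 0 = B.dual := by simp [hσ0]
  simp only [tAA, Form.subst, Form.dual]
  rw [e1, e0]
  simp only [Form.dual_dual]
  have t1 : Prov false [Form.tens B.dual B, B, B.dual] :=
    Prov.tens (Prov.ax false B) (prov_ax2 false B)
  have t2 : Prov false [Form.tens B.dual B, B.dual, B] :=
    t1.perm ((List.Perm.swap _ _ []).cons _)
  exact Prov.parr t2

theorem dir_parUnit2 (P : Proc) : Dir P (.par .one P) := by
  intro σ'
  refine ⟨fun i => σ' (i + 1), ?_⟩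
  have e1 : ((tAA P 1).1).subst σ' = ((tAA P 0).1).subst (fun i => σ' (i + 1)) :=
    tAA_at P 1 σ'
  simp only [tAA, Form.subst, Form.dual]
  rw [← e1]
  set B := ((tAA P 1).1).subst σ'
  have u1 : Prov false [Form.parr (σ' 0).dual (σ' 0)] := Prov.parr (Prov.ax false (σ' 0))
  have u2 : Prov false [Form.tens (Form.parr (σ' 0).dual (σ' 0)) B, B.dual] :=
    Prov.tens u1 (prov_ax2 false B)
  exact u2.perm (List.Perm.swap _ _ [])

theorem dir_parCong {P P' Q Q' : Proc} (h1 : Dir P P') (h2 : Dir Q Q') :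
    Dir (.par P Q) (.par P' Q') := by
  intro σ'
  obtain ⟨σP, prf1⟩ := h1 σ'
  obtain ⟨σQ, prf2⟩ := h2 (fun i => σ' (i + (tAA P' 0).2))
  set cP := (tAA P 0).2 with hcP
  set σ0 : ℕ → Form := fun i => if i < cP then σP i else σQ (i - cP) with hσ0
  refine ⟨σ0, ?_⟩
  have e1 : ((tAA P 0).1).subst σ0 = ((tAA P 0).1).subst σP :=
    tAA_agree P 0 _ _ (fun i hi1 hi2 => by simp only [hσ0]; rw [if_pos hi2])
  have e2 : ((tAA Q cP).1).subst σ0 = ((tAA Q 0).1).subst σQ := by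
    rw [tAA_at]
    congr 1
    funext i
    simp only [hσ0]
    rw [if_neg (by omega)]
    congr 1
    omega
  have e3 : ((tAA Q' (tAA P' 0).2).1).subst σ' =
      ((tAA Q' 0).1).subst (fun i => σ' (i + (tAA P' 0).2)) := tAA_at Q' _ σ'
  simp only [tAA, Form.subst, Form.dual]
  rw [e1, e2, e3]
  have t1 := Prov.tens (prf1.perm (List.Perm.swap _ _ []))
    (prf2.perm (List.Perm.swap _ _ []))
  have t2 := t1.perm (perm_r3 _ _ _ [])
  exact Prov.parr t2

theorem dir_actCong {A B : Proc} (b : Bool) (a ℓ : ℕ) (h : Dir A B) :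
    Dir (.act b a ℓ A) (.act b a ℓ B) := by
  intro σ'
  obtain ⟨σA, prf⟩ := h (fun i => σ' (i + 1))
  set σ0 : ℕ → Form := fun i => if i = 0 then σ' 0 else σA (i - 1) with hσ0
  refine ⟨σ0, ?_⟩
  have e0 : σ0 0 = σ' 0 := by simp [hσ0]
  have e1 : ((tAA A 1).1).subst σ0 = ((tAA A 0).1).subst σA := by
    have h := tAA_at A 1 σ0
    rw [h]
    congr 1
  have e2 : ((tAA B 1).1).subst σ' = ((tAA B 0).1).subst (fun i => σ' (i + 1)) :=
    tAA_at B 1 σ'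
  set C := (((tAA A 0).1).subst σA).dual with hC
  set B' := ((tAA B 0).1).subst (fun i => σ' (i + 1)) with hB'
  set s := σ' 0 with hs
  cases b
  · -- negative prefix
    simp only [tAA, Form.subst, Form.dual]
    rw [e0, e1, e2]
    simp only [Form.dual_dual]
    have w1 : Prov false [B', C] := prf.perm (List.Perm.swap _ _ [])
    have w3 : Prov false [Form.tens B' s.dual, C, s] :=
      Prov.tens w1 (Prov.ax false s)
    have w4 : Prov false [Form.parr C s, Form.tens B' s.dual] :=
      Prov.parr (w3.perm (perm_r3 _ _ _ []))
    have w5 : Prov false [Form.modp a s.dual, Form.modn a s] := Prov.ax false (Form.modn a s)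
    have w6 : Prov false [Form.tens (Form.parr C s) (Form.modp a s.dual),
        Form.tens B' s.dual, Form.modn a s] := Prov.tens w4 w5
    have w7 := Prov.parr (w6.perm (perm_r3 _ _ _ []))
    exact w7.perm (List.Perm.swap _ _ [])
  · -- positive prefix
    simp only [tAA, Form.subst, Form.dual]
    rw [e0, e1, e2]
    simp only [Form.dual_dual]
    have w1 : Prov false [B', C] := prf.perm (List.Perm.swap _ _ [])
    have w3 : Prov false [Form.tens B' s, C, s.dual] :=
      Prov.tens w1 (prov_ax2 false s)
    have w4 : Prov false [Form.parr C s.dual, Form.tens B' s] :=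
      Prov.parr (w3.perm (perm_r3 _ _ _ []))
    have w5 : Prov false [Form.modn a s, Form.modp a s.dual] :=
      (Prov.ax false (Form.modn a s)).perm (List.Perm.swap _ _ [])
    have w6 : Prov false [Form.tens (Form.modn a s) (Form.parr C s.dual),
        Form.modp a s.dual, Form.tens B' s] := Prov.tens w5 w4
    have w7 := Prov.parr (w6.perm (perm_r3 _ _ _ []))
    exact w7.perm (List.Perm.swap _ _ [])

theorem scimp {P Q : Proc} (h : SC P Q) : Dir P Q ∧ Dir Q P := by
  induction h with
  | refl P => exact ⟨dir_refl P, dir_refl P⟩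
  | symm _ ih => exact ⟨ih.2, ih.1⟩
  | trans _ _ ih1 ih2 => exact ⟨dir_trans ih1.1 ih2.1, dir_trans ih2.2 ih1.2⟩
  | parComm P Q => exact ⟨dir_parComm P Q, dir_parComm Q P⟩
  | parAssoc P Q R => exact ⟨dir_parAssoc1 P Q R, dir_parAssoc2 P Q R⟩
  | parUnit P => exact ⟨dir_parUnit1 P, dir_parUnit2 P⟩
  | parCong _ _ ih1 ih2 => exact ⟨dir_parCong ih1.1 ih2.1, dir_parCong ih1.2 ih2.2⟩
  | actCong b a ℓ _ ih => exact ⟨dir_actCong b a ℓ ih.1, dir_actCong b a ℓ ih.2⟩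

/-! ### Transport of AImp along SC, base case, and step expansion -/

theorem aimp_sc {P Q : Proc} (h : SC P Q) (ha : AImp Q Proc.one) : AImp P Proc.one := by
  obtain ⟨σ', hq⟩ := ha
  obtain ⟨σ, hpq⟩ := (scimp h).1 σ'
  have hq' := prov_parr_inv hq
  have hc := Prov.cut (hpq.perm (List.Perm.swap _ _ [])) hq'
  set KP := (tAA P 0).2 with hKP
  set KQ := (tAA Q 0).2 with hKQ
  set τ : ℕ → Form := fun i =>
    if i = KQ then Form.pv KP else if i = KP then Form.pv KQ else Form.pv i with hτ
  have eτ : τ KQ = Form.pv KP := by simp [hτ]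
  refine ⟨fun i => (σ i).subst τ, ?_⟩
  apply Prov.parr
  have hc2 : Prov false [(Form.subst σ (tAA P 0).1).dual, (tAA Proc.one KQ).1] := hc
  have h0 := hc2.substP τ
  simp only [List.map_cons, List.map_nil] at h0
  rw [Form.subst_dual, Form.subst_subst] at h0
  simpa [tAA, Form.subst, eτ, Form.dual] using h0

theorem aimp_one : AImp Proc.one Proc.one := by
  set J := Form.parr (.nv 1) (.pv 1) with hJ
  refine ⟨fun _ => J, ?_⟩
  show Prov false [Form.parr (Form.tens J.dual.dual J.dual) J]
  rw [Form.dual_dual]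
  have h1 : Prov false [J] := Prov.parr (Prov.ax false (.pv 1))
  have h2 : Prov false [Form.tens J J.dual, J] := Prov.tens h1 (Prov.ax false J)
  exact Prov.parr h2

theorem aimp_step_core (a ℓ m : ℕ) (P₁ Q₁ R : Proc)
    (h : AImp (.par P₁ (.par Q₁ R)) .one) :
    AImp (.par (.act true a ℓ P₁) (.par (.act false a m Q₁) R)) .one := by
  obtain ⟨σ', hq⟩ := h
  simp only [tAA, Form.subst, Form.dual] at hq
  set cP := (tAA P₁ 0).2 with hcP
  set cQ2 := (tAA Q₁ cP).2 with hcQ2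
  set KQ := (tAA R cQ2).2 with hKQ
  -- invert the pars
  have hq1 := prov_parr_inv hq
  have hq2 := prov_parr_inv hq1
  have hq3 := prov_parr_inv (hq2.perm (List.Perm.swap _ _ _))
  have hinv := hq3.perm ((perm_r3 _ _ _ _).trans (perm_r3 _ _ _ _))
  -- rename KQ ↔ KQ + 2
  set τ : ℕ → Form := fun i =>
    if i = KQ then Form.pv (KQ + 2) else if i = KQ + 2 then Form.pv KQ
    else Form.pv i with hτ
  have eτ : τ KQ = Form.pv (KQ + 2) := by simp [hτ]
  set σ'' : ℕ → Form := fun i => (σ' i).subst τ with hσ''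
  set B1 := ((tAA P₁ 0).1).subst σ'' with hB1
  set s := ((tAA Q₁ cP).1).subst σ'' with hs
  set B3 := ((tAA R cQ2).1).subst σ'' with hB3
  have hren : Prov false [B1.dual, s.dual, B3.dual,
      Form.parr (.nv (KQ + 2)) (.pv (KQ + 2))] := by
    have h0 := hinv.substP τ
    simp only [List.map_cons, List.map_nil] at h0
    rw [Form.subst_dual, Form.subst_dual, Form.subst_dual, Form.subst_subst,
      Form.subst_subst, Form.subst_subst] at h0
    simpa [Form.subst, eτ, hB1, hs, hB3, hσ'', Form.dual] using h0
  -- the substitution for the redex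
  set σ0 : ℕ → Form := fun i =>
    if i = 0 then s else if i = cP + 1 then s
    else if i ≤ cP then σ'' (i - 1) else σ'' (i - 2) with hσ0
  refine ⟨σ0, ?_⟩
  have hle : cP ≤ cQ2 := by rw [hcQ2]; exact tAA_le Q₁ cP
  have k1 : (tAA P₁ 1).2 = cP + 1 := by rw [tAA_snd_at P₁ 1, ← hcP]
  have k2 : (tAA Q₁ (cP + 1 + 1)).2 = cQ2 + 2 := by
    rw [tAA_snd_at Q₁ (cP + 1 + 1), hcQ2, tAA_snd_at Q₁ cP]; omega
  have k3 : (tAA R (cQ2 + 2)).2 = KQ + 2 := by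
    rw [tAA_snd_at R (cQ2 + 2), hKQ, tAA_snd_at R cQ2]; omega
  have e0 : σ0 0 = s := by simp [hσ0]
  have ec : σ0 (cP + 1) = s := by simp [hσ0]
  have c1 : ((tAA P₁ 1).1).subst σ0 = B1 := by
    have h0 := tAA_at P₁ 1 σ0
    rw [h0, hB1]
    refine tAA_agree P₁ 0 _ _ (fun i hi1 hi2 => ?_)
    rw [← hcP] at hi2
    have d1 : ¬ (i + 1 = 0) := by omega
    have d2 : ¬ (i + 1 = cP + 1) := by omega
    have d3 : i + 1 ≤ cP := by omega
    simp only [hσ0, if_neg d1, if_neg d2, if_pos d3]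
    simp
  have c2 : ((tAA Q₁ (cP + 1 + 1)).1).subst σ0 = s := by
    have h0 := tAA_at Q₁ (cP + 1 + 1) σ0
    rw [h0, hs]
    conv_rhs => rw [tAA_at]
    congr 1
    funext i
    have d1 : ¬ (i + (cP + 1 + 1) = 0) := by omega
    have d2 : ¬ (i + (cP + 1 + 1) = cP + 1) := by omega
    have d3 : ¬ (i + (cP + 1 + 1) ≤ cP) := by omega
    simp only [hσ0, if_neg d1, if_neg d2, if_neg d3]
    congr 1
  have c3 : ((tAA R (cQ2 + 2)).1).subst σ0 = B3 := by
    have h0 := tAA_at R (cQ2 + 2) σ0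
    rw [h0, hB3]
    conv_rhs => rw [tAA_at]
    congr 1
    funext i
    have d1 : ¬ (i + (cQ2 + 2) = 0) := by omega
    have d2 : ¬ (i + (cQ2 + 2) = cP + 1) := by omega
    have d3 : ¬ (i + (cQ2 + 2) ≤ cP) := by omega
    simp only [hσ0, if_neg d1, if_neg d2, if_neg d3]
    congr 1
  simp only [tAA, k1, k2, k3, Form.subst, Form.dual]
  rw [e0, ec, c1, c2, c3]
  simp only [Form.dual_dual]
  -- now build the proof
  have b1a : Prov false [Form.parr s.dual s] := Prov.parr (Prov.ax false s)
  have b1b : Prov false [Form.modp a s.dual, Form.modn a s] := Prov.ax false (Form.modn a s)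
  have br1 : Prov false [Form.modn a s,
      Form.tens (Form.parr s.dual s) (Form.modp a s.dual)] :=
    (Prov.tens b1a b1b).perm (List.Perm.swap _ _ [])
  have br2 : Prov false [Form.parr B1.dual s.dual, B3.dual,
      Form.parr (.nv (KQ + 2)) (.pv (KQ + 2))] := Prov.parr hren
  have core : Prov false [Form.tens (Form.modn a s) (Form.parr B1.dual s.dual),
      Form.tens (Form.parr s.dual s) (Form.modp a s.dual), B3.dual,
      Form.parr (.nv (KQ + 2)) (.pv (KQ + 2))] := Prov.tens br1 br2
  have step1 := Prov.parr (core.perm (perm_r3 _ _ _ _))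
  -- step1 : [parr D2 B3ᗮ, D1, I]
  have step2 := Prov.parr (step1.perm (List.Perm.swap _ _ _))
  -- step2 : [parr D1 (parr D2 B3ᗮ), I]
  exact Prov.parr step2

theorem exec_aimp {Q : Proc} {l : List (ℕ × ℕ)} {R : Proc}
    (e : ExecL Q l R) (hR : SC R Proc.one) : AImp Q Proc.one := by
  induction e with
  | refl h => exact aimp_sc (h.trans hR) aimp_one
  | step s _ ih =>
      obtain ⟨a, P₁, Q₁, Rr, h1, h2⟩ := s
      exact aimp_sc h1 (aimp_step_core _ _ _ _ _ _ (aimp_sc h2.symm (ih hR)))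
/-- progress: if `P` has at least one action prefix and
`⌈P⌉ₐ ⊸ ⌈1⌉ₐ` is provable in pure MLL, then `P` reduces to some `Q` with
`⌈Q⌉ₐ ⊸ ⌈1⌉ₐ` provable in pure MLL. -/
theorem async_progress (P : Proc) (hP : 1 ≤ P.size) (h : AImp P .one) :
    ∃ p Q, Step P p Q ∧ AImp Q .one := by
  obtain ⟨l, e⟩ := aimp_red h
  cases e with
  | refl hsc =>
      have := hsc.size_eq
      simp [Proc.size] at this
      omega
  | step s e' =>
      rename_i p Q l'
      exact ⟨p, Q, s, exec_aimp e' (SC.refl _)⟩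
end
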